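/- arXiv:2102.10433 — 3 statements merged into one kernel-verified Lean document; each statement's English description precedes it below -/
import Mathlib

section
/- Let C2 be a linear code (GF(4)-linear subspace) in GF(4)^N and let p0 ∈ [1/4, 1]. Then Σ_{z ∈ GF(4)^N} F_{z−C2}(p0) · log2( F_{z−C2}(p0) / F_{C2}(p0) ) ≤ 0. -/
/-!
GF(4) is modeled as `GaloisField 2 2`, vectors in GF(4)^N as `Fin N → GaloisField 2 2`,
Hamming weight as `hammingNorm`. `Fw C p0` is the function
`F_C(p0) = (1/|C|) · Σ_{v ∈ C} p0^(N−w(v)) · ((1−p0)/3)^(w(v))`,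
`translateSet z C` is the translate `z − C`, and `codeFinset` turns a linear code
(a `Submodule`) into the corresponding `Finset`.
-/

open scoped Classical

noncomputable instance : Fintype (GaloisField 2 2) := Fintype.ofFinite _

noncomputable def Fw {N : ℕ} (C : Finset (Fin N → GaloisField 2 2)) (p0 : ℝ) : ℝ :=
  ((C.card : ℝ))⁻¹ *
    ∑ v ∈ C, p0 ^ (N - hammingNorm v) * ((1 - p0) / 3) ^ hammingNorm v

noncomputable def translateSet {N : ℕ} (z : Fin N → GaloisField 2 2)
    (C : Finset (Fin N → GaloisField 2 2)) : Finset (Fin N → GaloisField 2 2) :=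
  C.image fun c => z - c

noncomputable def codeFinset {N : ℕ}
    (C : Submodule (GaloisField 2 2) (Fin N → GaloisField 2 2)) :
    Finset (Fin N → GaloisField 2 2) :=
  Finset.univ.filter (· ∈ C)

/-!
With `a = p0` and `b = (1 - p0) / 3`, the summand of `F` is `∏ i, (if x i = 0 then a else b)`.
Writing `a = (a - b) + b` and expanding gives `∑ S, (a - b)^|S| b^(N - |S|) [x vanishes on S]`,
a combination with nonnegative coefficients once `b ≤ a`, i.e. `p0 ≥ 1/4`. Over the coset `z - C`
of a linear code, the vectors vanishing on `S` are those `c ∈ C` agreeing with `z` on `S`: either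
none or a translate of `{c ∈ C | c vanishes on S}`. Hence `F_{z-C} ≤ F_C` term by term, so every
`F_{z-C} log (F_{z-C} / F_C)` is nonpositive.
-/

open Finset

section HammingWeight

variable {ι G R : Type*} [Fintype ι] [AddGroup G] [DecidableEq G] [CommRing R]

theorem prod_ite_eq_zero_eq_pow_mul_pow (a b : R) (x : ι → G) :
    ∏ i, (if x i = 0 then a else b) =
      a ^ (Fintype.card ι - hammingNorm x) * b ^ hammingNorm x := by
  have hcard := card_filter_add_card_filter_not (s := univ) (fun i => x i = 0)
  rw [card_univ] at hcard
  rw [prod_ite, prod_const, prod_const, hammingNorm]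
  simp only [ne_eq]
  congr 2
  omega

theorem prod_ite_eq_zero_eq_sum_powerset [DecidableEq ι] (a b : R) (x : ι → G) :
    ∏ i, (if x i = 0 then a else b) =
      ∑ S ∈ univ.powerset,
        (a - b) ^ #S * b ^ #(univ \ S) * if ∀ i ∈ S, x i = 0 then 1 else 0 := by
  have hsplit : ∀ i, (if x i = 0 then a else b) = (if x i = 0 then a - b else 0) + b := by
    intro i; split_ifs <;> simp
  simp_rw [hsplit, prod_add, prod_ite_zero, prod_const]
  refine sum_congr rfl fun S _ => ?_
  split_ifs <;> simp

theorem card_filter_sub_eq_zero_le [DecidableEq ι] [Fintype G] (H : AddSubgroup (ι → G))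
    (S : Finset ι) (z : ι → G) :
    #{c ∈ univ.filter (· ∈ H) | ∀ i ∈ S, (z - c) i = 0} ≤
      #{c ∈ univ.filter (· ∈ H) | ∀ i ∈ S, c i = 0} := by
  rcases eq_empty_or_nonempty {c ∈ univ.filter (· ∈ H) | ∀ i ∈ S, (z - c) i = 0} with
    hempty | ⟨c₀, hc₀⟩
  · rw [hempty, card_empty]
    exact Nat.zero_le _
  refine card_le_card_of_injOn (· - c₀) (fun c hc => ?_) sub_left_injective.injOn
  simp only [coe_filter, mem_filter, mem_univ, true_and, Set.mem_ofPred_eq, Pi.sub_apply,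
    sub_eq_zero] at hc hc₀ ⊢
  exact ⟨H.sub_mem hc.1 hc₀.1, fun i hi => by rw [← hc.2 i hi, ← hc₀.2 i hi]⟩

theorem sum_pow_hammingNorm_sub_le [DecidableEq ι] [PartialOrder R] [IsOrderedRing R]
    [Fintype G] (H : AddSubgroup (ι → G)) {a b : R} (hb : 0 ≤ b) (hba : b ≤ a) (z : ι → G) :
    ∑ c ∈ univ.filter (· ∈ H),
        a ^ (Fintype.card ι - hammingNorm (z - c)) * b ^ hammingNorm (z - c) ≤
      ∑ c ∈ univ.filter (· ∈ H), a ^ (Fintype.card ι - hammingNorm c) * b ^ hammingNorm c := by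
  simp_rw [← prod_ite_eq_zero_eq_pow_mul_pow, prod_ite_eq_zero_eq_sum_powerset]
  rw [sum_comm, sum_comm (s := univ.filter (· ∈ H))]
  refine sum_le_sum fun S _ => ?_
  simp_rw [← mul_sum, sum_boole]
  exact mul_le_mul_of_nonneg_left (Nat.mono_cast (card_filter_sub_eq_zero_le H S z))
    (mul_nonneg (pow_nonneg (sub_nonneg.2 hba) _) (pow_nonneg hb _))

end HammingWeight

theorem Fw_nonneg {N : ℕ} (C : Finset (Fin N → GaloisField 2 2)) {p0 : ℝ} (hp0 : 0 ≤ p0)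
    (hp1 : p0 ≤ 1) : 0 ≤ Fw C p0 :=
  mul_nonneg (by positivity) (sum_nonneg fun v _ => by
    have : 0 ≤ (1 - p0) / 3 := by linarith
    positivity)

theorem Fw_translateSet_le {N : ℕ} (C : Submodule (GaloisField 2 2) (Fin N → GaloisField 2 2))
    {p0 : ℝ} (hp0 : 1 / 4 ≤ p0) (hp1 : p0 ≤ 1) (z : Fin N → GaloisField 2 2) :
    Fw (translateSet z (codeFinset C)) p0 ≤ Fw (codeFinset C) p0 := by
  have hinj : Function.Injective (z - ·) := sub_right_injective
  have key := sum_pow_hammingNorm_sub_le C.toAddSubgroup (by linarith : 0 ≤ (1 - p0) / 3)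
    (by linarith : (1 - p0) / 3 ≤ p0) z
  rw [Fintype.card_fin] at key
  unfold Fw translateSet
  rw [card_image_of_injective _ hinj, sum_image fun _ _ _ _ h => hinj h]
  exact mul_le_mul_of_nonneg_left key (by positivity)

theorem Real.mul_logb_div_nonpos {b x y : ℝ} (hb : 1 < b) (hx : 0 ≤ x) (hxy : x ≤ y) :
    x * Real.logb b (x / y) ≤ 0 :=
  mul_nonpos_of_nonneg_of_nonpos hx
    (Real.logb_nonpos hb (div_nonneg hx (hx.trans hxy)) (div_le_one_of_le₀ hxy (hx.trans hxy)))

theorem first_term_nonpos_general {N : ℕ}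
    (C2 : Submodule (GaloisField 2 2) (Fin N → GaloisField 2 2))
    (p0 : ℝ) (hp0 : p0 ∈ Set.Icc (1 / 4 : ℝ) 1) :
    (∑ z : Fin N → GaloisField 2 2,
        Fw (translateSet z (codeFinset C2)) p0 *
          Real.logb 2 (Fw (translateSet z (codeFinset C2)) p0 / Fw (codeFinset C2) p0)) ≤ 0 := by
  obtain ⟨hp0, hp1⟩ := hp0
  exact sum_nonpos fun z _ => Real.mul_logb_div_nonpos one_lt_two
    (Fw_nonneg _ (by linarith) hp1) (Fw_translateSet_le C2 hp0 hp1 z)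

/-- Lemma 3: the first relative-entropy-like term in the secrecy leakage is nonpositive. -/
theorem first_term_nonpos {N : ℕ} (hN : 1 ≤ N)
    (C2 : Submodule (GaloisField 2 2) (Fin N → GaloisField 2 2))
    (p0 : ℝ) (hp0 : p0 ∈ Set.Icc (1 / 4 : ℝ) 1) :
    (∑ z : Fin N → GaloisField 2 2,
        Fw (translateSet z (codeFinset C2)) p0 *
          Real.logb 2 (Fw (translateSet z (codeFinset C2)) p0 / Fw (codeFinset C2) p0)) ≤ 0 :=
  first_term_nonpos_general C2 p0 hp0
end

section
/- Let C be a linear code (GF(4)-linear subspace) in GF(4)^N, let z ∈ GF(4)^N, and let p0 ∈ [1/4, 1]. Then F_{z−C}(p0) ≤ F_{C}(p0). -/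
/-!
Write `γ = (1 - p0)/3` and `α = p0 - γ = (4 p0 - 1)/3`, so that `α, γ ≥ 0` exactly when
`1/4 ≤ p0 ≤ 1`. Since the weight of `v` is `∏ i, (α [v i = 0] + γ)`, expanding the product gives
`∑_{v ∈ s} p0^(N - w(v)) γ^w(v) = ∑_S α^|S| γ^(N - |S|) · #{v ∈ s | v vanishes on S}`,
a combination with nonnegative coefficients of the counts of words vanishing on `S`.
The words of `z - C` vanishing on `S` have pairwise differences in `C` that vanish on `S`,
so there are at most as many of them as codewords vanishing on `S`.
-/

open scoped Classical

open Finset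

namespace HammingWeight

variable {ι G R : Type*} [Fintype ι]

section Expansion

variable [Zero G] [CommSemiring R]

theorem pow_mul_pow_hammingNorm_eq_prod (a b : R) (v : ι → G) :
    a ^ (Fintype.card ι - hammingNorm v) * b ^ hammingNorm v =
      ∏ i, if v i = 0 then a else b := by
  have hzeros : #{i | v i = 0} = Fintype.card ι - hammingNorm v := by
    rw [hammingNorm, ← card_univ, ← card_filter_add_card_filter_not (s := univ) (fun i => v i = 0)]
    simp only [ne_eq, Nat.add_sub_cancel]
  rw [prod_ite, prod_const, prod_const, hzeros]
  rfl

theorem prod_ite_add_eq_sum_powerset (α γ : R) (v : ι → G) :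
    (∏ i, if v i = 0 then α + γ else γ) =
      ∑ S ∈ univ.powerset, if ∀ i ∈ S, v i = 0 then α ^ #S * γ ^ (Fintype.card ι - #S) else 0 := by
  have hsplit : ∀ i, (if v i = 0 then α + γ else γ) = (if v i = 0 then α else 0) + γ := by
    intro i; split_ifs <;> simp
  simp_rw [hsplit, prod_add, prod_ite_zero, prod_const, card_sdiff_of_subset (subset_univ _),
    card_univ, ite_mul, zero_mul]

theorem sum_pow_mul_pow_hammingNorm (α γ : R) (s : Finset (ι → G)) :
    ∑ v ∈ s, (α + γ) ^ (Fintype.card ι - hammingNorm v) * γ ^ hammingNorm v =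
      ∑ S ∈ univ.powerset,
        α ^ #S * γ ^ (Fintype.card ι - #S) * #{v ∈ s | ∀ i ∈ S, v i = 0} := by
  simp_rw [pow_mul_pow_hammingNorm_eq_prod, prod_ite_add_eq_sum_powerset]
  rw [sum_comm]
  refine sum_congr rfl fun S _ => ?_
  rw [card_filter, Nat.cast_sum, mul_sum]
  simp

end Expansion

theorem card_filter_vanishing_le_of_sub_mem [AddGroup G] {s t : Finset (ι → G)}
    (h : ∀ x ∈ t, ∀ y ∈ t, x - y ∈ s) (S : Finset ι) :
    #{v ∈ t | ∀ i ∈ S, v i = 0} ≤ #{v ∈ s | ∀ i ∈ S, v i = 0} := by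
  refine card_le_card_sub_self.trans (card_le_card fun d hd => ?_)
  obtain ⟨x, hx, y, hy, rfl⟩ := mem_sub.mp hd
  rw [mem_filter] at hx hy ⊢
  exact ⟨h x hx.1 y hy.1, fun i hi => by simp [hx.2 i hi, hy.2 i hi]⟩

theorem sum_pow_mul_pow_hammingNorm_le_of_sub_mem [AddGroup G] [CommSemiring R] [PartialOrder R]
    [IsOrderedRing R] {α γ : R} (hα : 0 ≤ α) (hγ : 0 ≤ γ) {s t : Finset (ι → G)}
    (h : ∀ x ∈ t, ∀ y ∈ t, x - y ∈ s) :
    ∑ v ∈ t, (α + γ) ^ (Fintype.card ι - hammingNorm v) * γ ^ hammingNorm v ≤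
      ∑ v ∈ s, (α + γ) ^ (Fintype.card ι - hammingNorm v) * γ ^ hammingNorm v := by
  rw [sum_pow_mul_pow_hammingNorm, sum_pow_mul_pow_hammingNorm]
  refine sum_le_sum fun S _ => mul_le_mul_of_nonneg_left ?_ (by positivity)
  exact Nat.mono_cast (card_filter_vanishing_le_of_sub_mem h S)

end HammingWeight

open HammingWeight in
theorem translate_Fw_le_general {N : ℕ}
    (C : Submodule (GaloisField 2 2) (Fin N → GaloisField 2 2))
    (z : Fin N → GaloisField 2 2) (p0 : ℝ) (hp0 : p0 ∈ Set.Icc (1 / 4 : ℝ) 1) :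
    Fw (translateSet z (codeFinset C)) p0 ≤ Fw (codeFinset C) p0 := by
  obtain ⟨hp1, hp2⟩ := hp0
  have hcard : #(translateSet z (codeFinset C)) = #(codeFinset C) :=
    card_image_of_injective _ sub_right_injective
  have hdiff : ∀ x ∈ translateSet z (codeFinset C), ∀ y ∈ translateSet z (codeFinset C),
      x - y ∈ codeFinset C := by
    simp only [translateSet, codeFinset, mem_image, mem_filter, mem_univ, true_and]
    rintro _ ⟨a, ha, rfl⟩ _ ⟨b, hb, rfl⟩
    simpa using C.sub_mem hb ha
  have key := sum_pow_mul_pow_hammingNorm_le_of_sub_mem (α := p0 - (1 - p0) / 3)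
    (γ := (1 - p0) / 3) (by linarith) (by linarith) hdiff
  rw [sub_add_cancel, Fintype.card_fin] at key
  rw [Fw, Fw, hcard]
  gcongr

/-- Pointwise coset inequality (quaternary analogue of Kløve's Theorem 1.19):
`F_{z−C}(p0) ≤ F_C(p0)` for `p0 ∈ [1/4, 1]`. -/
theorem translate_Fw_le {N : ℕ} (hN : 1 ≤ N)
    (C : Submodule (GaloisField 2 2) (Fin N → GaloisField 2 2))
    (z : Fin N → GaloisField 2 2) (p0 : ℝ) (hp0 : p0 ∈ Set.Icc (1 / 4 : ℝ) 1) :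
    Fw (translateSet z (codeFinset C)) p0 ≤ Fw (codeFinset C) p0 :=
  translate_Fw_le_general C z p0 hp0
end

section
/- Let C be a linear code (GF(4)-linear subspace) in GF(4)^N, let g ∈ GF(4)^N with g ∉ C, let C' be the GF(4)-linear span of C ∪ {g}, and let p0 ∈ [1/4, 1]. Then F_{C'}(p0) ≤ F_{C}(p0); consequently log2(4^N · F_{C'}(p0)) ≤ log2(4^N · F_{C}(p0)), i.e., the secrecy leakage upper bound does not increase when the mask code is enlarged by one generator. -/
/-!
GF(4) is modeled as `GaloisField 2 2`, vectors in GF(4)^N as `Fin N → GaloisField 2 2`,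
Hamming weight as `hammingNorm`. `Fw C p0` is the function
`F_C(p0) = (1/|C|) · Σ_{v ∈ C} p0^(N−w(v)) · ((1−p0)/3)^(w(v))`,
`translateSet z C` is the translate `z − C`, and `codeFinset` turns a linear code
(a `Submodule`) into the corresponding `Finset`.
-/

open scoped Classical

namespace EnlargeAux

abbrev GF4 := GaloisField 2 2

noncomputable def phi (p q : ℝ) (a : GF4) : ℝ := if a = 0 then p else q

noncomputable def fwt {N : ℕ} (p q : ℝ) (v : Fin N → GF4) : ℝ := ∏ i, phi p q (v i)

lemma fwt_eq {N : ℕ} (p q : ℝ) (v : Fin N → GF4) :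
    fwt p q v = p ^ (N - hammingNorm v) * q ^ hammingNorm v := by
  unfold fwt
  rw [← Finset.prod_filter_mul_prod_filter_not Finset.univ (fun i => v i = 0)
    (fun i => phi p q (v i))]
  have h1 : ∀ i ∈ Finset.univ.filter (fun i => v i = 0), phi p q (v i) = p := by
    intro i hi; simp only [Finset.mem_filter] at hi; simp [phi, hi.2]
  have h2 : ∀ i ∈ Finset.univ.filter (fun i => ¬ v i = 0), phi p q (v i) = q := by
    intro i hi; simp only [Finset.mem_filter] at hi; simp [phi, hi.2]
  rw [Finset.prod_congr rfl h1, Finset.prod_congr rfl h2, Finset.prod_const, Finset.prod_const]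
  have hcard := Finset.card_filter_add_card_filter_not
    (s := (Finset.univ : Finset (Fin N))) (p := fun i => v i = 0)
  have hnorm : (Finset.univ.filter (fun i => ¬ v i = 0)).card = hammingNorm v := by
    rfl
  rw [hnorm] at hcard
  simp only [Finset.card_univ, Fintype.card_fin] at hcard
  rw [hnorm]
  rw [Nat.eq_sub_of_add_eq hcard]

noncomputable def hh (p q : ℝ) : Option GF4 → GF4 → ℝ
  | none, _ => Real.sqrt q
  | some k, a => if a = k then Real.sqrt (p - q) else 0

lemma hh_sum (p q : ℝ) (hq : 0 ≤ q) (hpq : q ≤ p) (a b : GF4) :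
    ∑ o : Option GF4, hh p q o a * hh p q o b = phi p q (a + b) := by
  rw [Fintype.sum_option]
  have h1 : hh p q none a * hh p q none b = q := Real.mul_self_sqrt hq
  have h2 : ∀ k : GF4, hh p q (some k) a * hh p q (some k) b
      = if k = a ∧ k = b then p - q else 0 := by
    intro k
    simp only [hh]
    by_cases ha : a = k
    · by_cases hb : b = k
      · rw [if_pos ha, if_pos hb, if_pos ⟨ha.symm, hb.symm⟩]
        exact Real.mul_self_sqrt (by linarith)
      · rw [if_neg hb, mul_zero, if_neg (by rintro ⟨_, rfl⟩; exact hb rfl)]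
    · rw [if_neg ha, zero_mul, if_neg (by rintro ⟨rfl, _⟩; exact ha rfl)]
  rw [h1, Finset.sum_congr rfl (fun k _ => h2 k)]
  by_cases hab : a = b
  · subst hab
    simp only [and_self]
    rw [Finset.sum_ite_eq' Finset.univ a (fun _ => p - q), if_pos (Finset.mem_univ a)]
    have hz : a + a = 0 := CharTwo.add_self_eq_zero a
    simp only [phi, if_pos hz]
    ring
  · have hz : (a + b) ≠ 0 := by
      intro h
      exact hab ((eq_neg_of_add_eq_zero_left h).trans (CharTwo.neg_eq b))
    have hk : ∀ k : GF4, (if k = a ∧ k = b then p - q else 0) = 0 := by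
      intro k
      rw [if_neg]
      rintro ⟨rfl, rfl⟩
      exact hab rfl
    rw [Finset.sum_congr rfl (fun k _ => hk k)]
    simp [phi, hz]

noncomputable def G {N : ℕ} (p q : ℝ) (u : Fin N → Option GF4) (x : Fin N → GF4) : ℝ :=
  ∏ i, hh p q (u i) (x i)

lemma fwt_add {N : ℕ} (p q : ℝ) (hq : 0 ≤ q) (hpq : q ≤ p) (x y : Fin N → GF4) :
    fwt p q (x + y) = ∑ u : Fin N → Option GF4, G p q u x * G p q u y := by
  have h1 : ∀ u : Fin N → Option GF4,
      G p q u x * G p q u y = ∏ i, (hh p q (u i) (x i) * hh p q (u i) (y i)) :=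
    fun u => (Finset.prod_mul_distrib).symm
  have h2 := Fintype.prod_sum (κ := fun _ : Fin N => Option GF4)
    (f := fun i o => hh p q o (x i) * hh p q o (y i))
  rw [Finset.sum_congr rfl (fun u _ => h1 u), ← h2]
  exact Finset.prod_congr rfl fun i _ => ((hh_sum p q hq hpq (x i) (y i)).trans rfl).symm

lemma psd {N : ℕ} (p q : ℝ) (hq : 0 ≤ q) (hpq : q ≤ p) (a : (Fin N → GF4) → ℝ) :
    0 ≤ ∑ x : Fin N → GF4, ∑ y : Fin N → GF4, a x * a y * fwt p q (x + y) := by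
  have key : ∀ x y : Fin N → GF4, a x * a y * fwt p q (x + y)
      = ∑ u : Fin N → Option GF4, (a x * G p q u x) * (a y * G p q u y) := by
    intro x y
    rw [fwt_add p q hq hpq, Finset.mul_sum]
    exact Finset.sum_congr rfl fun u _ => by ring
  calc (0:ℝ) ≤ ∑ u : Fin N → Option GF4, (∑ x : Fin N → GF4, a x * G p q u x)^2 :=
        Finset.sum_nonneg fun u _ => sq_nonneg _
    _ = ∑ u : Fin N → Option GF4, ∑ x : Fin N → GF4, ∑ y : Fin N → GF4,
          (a x * G p q u x) * (a y * G p q u y) := by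
        refine Finset.sum_congr rfl fun u _ => ?_
        rw [sq, Finset.sum_mul_sum]
    _ = ∑ x : Fin N → GF4, ∑ y : Fin N → GF4, a x * a y * fwt p q (x + y) := by
        rw [Finset.sum_comm]
        refine Finset.sum_congr rfl fun x _ => ?_
        rw [Finset.sum_comm]
        exact Finset.sum_congr rfl fun y _ => (key x y).symm

lemma coset_le {N : ℕ} (p q : ℝ) (hq : 0 ≤ q) (hpq : q ≤ p)
    (C : Submodule GF4 (Fin N → GF4)) (z : Fin N → GF4) :
    ∑ c ∈ codeFinset C, fwt p q (z + c) ≤ ∑ c ∈ codeFinset C, fwt p q c := by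
  classical
  set A := codeFinset C with hA
  have memA : ∀ x, x ∈ A ↔ x ∈ C := by intro x; simp [codeFinset, hA]
  have haddA : ∀ x ∈ A, ∀ y ∈ A, x + y ∈ A := fun x hx y hy =>
    (memA _).2 (C.add_mem ((memA _).1 hx) ((memA _).1 hy))
  have hzeroA : (0 : Fin N → GF4) ∈ A := (memA _).2 C.zero_mem
  have hself : ∀ v : Fin N → GF4, v + v = 0 := fun v =>
    funext fun i => CharTwo.add_self_eq_zero (v i)
  have reindex : ∀ x ∈ A, ∀ F : (Fin N → GF4) → ℝ,
      ∑ c ∈ A, F (x + c) = ∑ c ∈ A, F c := by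
    intro x hx F
    refine Finset.sum_nbij' (fun c => x + c) (fun c => x + c)
      (fun c hc => haddA x hx c hc) (fun c hc => haddA x hx c hc) ?_ ?_ (fun c hc => rfl)
    · intro c hc; show x + (x + c) = c; rw [← add_assoc, hself, zero_add]
    · intro c hc; show x + (x + c) = c; rw [← add_assoc, hself, zero_add]
  set B := A.image (fun c => z + c) with hB
  have hBsum : ∀ F : (Fin N → GF4) → ℝ, ∑ y ∈ B, F y = ∑ c ∈ A, F (z + c) := by
    intro F
    rw [hB, Finset.sum_image]
    intro x _ y _ h
    exact add_left_cancel h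
  set T1 := ∑ c ∈ A, fwt p q c with hT1
  set T2 := ∑ c ∈ A, fwt p q (z + c) with hT2
  set a : (Fin N → GF4) → ℝ :=
    fun x => (if x ∈ A then 1 else 0) - (if x ∈ B then 1 else 0) with ha
  have indic : ∀ H : (Fin N → GF4) → ℝ,
      ∑ x : Fin N → GF4, a x * H x = (∑ x ∈ A, H x) - ∑ c ∈ A, H (z + c) := by
    intro H
    have h1 : ∀ y, a y * H y
        = (if y ∈ A then H y else 0) - (if y ∈ B then H y else 0) := by
      intro y; simp only [ha]; split_ifs <;> ring
    rw [Finset.sum_congr rfl (fun y _ => h1 y), Finset.sum_sub_distrib,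
      Finset.sum_ite_mem, Finset.sum_ite_mem, Finset.univ_inter, Finset.univ_inter, hBsum]
  have hpsd := psd p q hq hpq a
  have hx1 : ∀ x, ∑ y : Fin N → GF4, a x * a y * fwt p q (x + y)
      = a x * ((∑ c ∈ A, fwt p q (x + c)) - ∑ c ∈ A, fwt p q (x + (z + c))) := by
    intro x
    rw [← indic (fun y => fwt p q (x + y)), Finset.mul_sum]
    exact Finset.sum_congr rfl fun y _ => (mul_assoc _ _ _)
  rw [Finset.sum_congr rfl (fun x _ => hx1 x),
    indic (fun x => (∑ c ∈ A, fwt p q (x + c)) - ∑ c ∈ A, fwt p q (x + (z + c)))] at hpsd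
  have hHA : ∀ x ∈ A,
      (∑ c ∈ A, fwt p q (x + c)) - ∑ c ∈ A, fwt p q (x + (z + c)) = T1 - T2 := by
    intro x hx
    have e1 : ∑ c ∈ A, fwt p q (x + c) = T1 := by rw [hT1]; exact reindex x hx _
    have e2 : ∑ c ∈ A, fwt p q (x + (z + c)) = T2 := by
      have : ∀ c, x + (z + c) = z + (x + c) := fun c => by ring
      rw [Finset.sum_congr rfl (fun c _ => by rw [this c]), hT2]
      exact reindex x hx (fun c => fwt p q (z + c))
    rw [e1, e2]
  have hHB : ∀ x ∈ A,
      (∑ c ∈ A, fwt p q ((z + x) + c)) - ∑ c ∈ A, fwt p q ((z + x) + (z + c)) = T2 - T1 := by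
    intro x hx
    have e1 : ∑ c ∈ A, fwt p q ((z + x) + c) = T2 := by
      have : ∀ c : Fin N → GF4, (z + x) + c = z + (x + c) := fun c => by ring
      rw [Finset.sum_congr rfl (fun c _ => by rw [this c]), hT2]
      exact reindex x hx (fun c => fwt p q (z + c))
    have e2 : ∑ c ∈ A, fwt p q ((z + x) + (z + c)) = T1 := by
      have : ∀ c : Fin N → GF4, (z + x) + (z + c) = (z + z) + (x + c) := fun c => by ring
      rw [Finset.sum_congr rfl (fun c _ => by rw [this c, hself z, zero_add]), hT1]
      exact reindex x hx _
    rw [e1, e2]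
  rw [Finset.sum_congr rfl hHA, Finset.sum_congr rfl (fun x hx => hHB x hx),
    Finset.sum_const, Finset.sum_const] at hpsd
  have hcard : 0 < (A.card : ℝ) := by
    exact_mod_cast Finset.card_pos.2 ⟨0, hzeroA⟩
  simp only [nsmul_eq_mul] at hpsd
  nlinarith [hpsd, hcard]

end EnlargeAux

/-- Enlarging the mask code by one generator does not increase the secrecy leakage bound. -/
theorem enlarge_code_Fw_le {N : ℕ} (hN : 1 ≤ N)
    (C : Submodule (GaloisField 2 2) (Fin N → GaloisField 2 2))
    (g : Fin N → GaloisField 2 2) (hg : g ∉ C)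
    (C' : Submodule (GaloisField 2 2) (Fin N → GaloisField 2 2))
    (hC' : C' = Submodule.span (GaloisField 2 2) ((C : Set (Fin N → GaloisField 2 2)) ∪ {g}))
    (p0 : ℝ) (hp0 : p0 ∈ Set.Icc (1 / 4 : ℝ) 1) :
    Fw (codeFinset C') p0 ≤ Fw (codeFinset C) p0 ∧
    Real.logb 2 ((4 : ℝ) ^ N * Fw (codeFinset C') p0) ≤
      Real.logb 2 ((4 : ℝ) ^ N * Fw (codeFinset C) p0) := by
  classical
  open EnlargeAux in
  obtain ⟨hp1, hp2⟩ := hp0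
  set q : ℝ := (1 - p0) / 3 with hqdef
  have hq : 0 ≤ q := by rw [hqdef]; linarith
  have hpq : q ≤ p0 := by rw [hqdef]; linarith
  have hp0pos : (0:ℝ) < p0 := by linarith
  have memA : ∀ x, x ∈ codeFinset C ↔ x ∈ C := by intro x; simp [codeFinset]
  have memA' : ∀ x, x ∈ codeFinset C' ↔ x ∈ C' := by intro x; simp [codeFinset]
  have hmemC' : ∀ v, v ∈ C' ↔ ∃ a : EnlargeAux.GF4, ∃ c ∈ C, a • g + c = v := by
    intro v
    rw [hC', Submodule.span_union, Submodule.span_eq, Submodule.mem_sup]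
    constructor
    · rintro ⟨y, hy, w, hw, rfl⟩
      obtain ⟨a, rfl⟩ := Submodule.mem_span_singleton.1 hw
      exact ⟨a, y, hy, add_comm _ _⟩
    · rintro ⟨a, c, hc, rfl⟩
      exact ⟨c, hc, a • g, Submodule.mem_span_singleton.2 ⟨a, rfl⟩, add_comm _ _⟩
  -- the bijection data
  have hmaps : ∀ (ac : EnlargeAux.GF4 × (Fin N → GaloisField 2 2)),
      ac ∈ (Finset.univ : Finset EnlargeAux.GF4) ×ˢ codeFinset C →
      ac.1 • g + ac.2 ∈ codeFinset C' := by
    rintro ⟨a, c⟩ hac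
    rw [Finset.mem_product] at hac
    exact (memA' _).2 ((hmemC' _).2 ⟨a, c, (memA _).1 hac.2, rfl⟩)
  have hinj : ∀ (ac : EnlargeAux.GF4 × (Fin N → GaloisField 2 2)),
      ac ∈ (Finset.univ : Finset EnlargeAux.GF4) ×ˢ codeFinset C →
      ∀ (bd : EnlargeAux.GF4 × (Fin N → GaloisField 2 2)),
      bd ∈ (Finset.univ : Finset EnlargeAux.GF4) ×ˢ codeFinset C →
      ac.1 • g + ac.2 = bd.1 • g + bd.2 → ac = bd := by
    rintro ⟨a, c⟩ hac ⟨b, d⟩ hbd h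
    rw [Finset.mem_product] at hac hbd
    have hc : c ∈ C := (memA _).1 hac.2
    have hd : d ∈ C := (memA _).1 hbd.2
    by_cases hab : a = b
    · subst hab
      have : c = d := by
        have := add_left_cancel h
        exact this
      simp [this]
    · exfalso
      have h2 : (a - b) • g = d - c := by
        rw [sub_smul]
        exact sub_eq_sub_iff_add_eq_add.mpr (h.trans (add_comm _ _))
      have hgC : g ∈ C := by
        have h3 : g = (a - b)⁻¹ • ((a - b) • g) := by
          rw [smul_smul, inv_mul_cancel₀ (sub_ne_zero.2 hab), one_smul]
        rw [h3, h2]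
        exact C.smul_mem _ (C.sub_mem hd hc)
      exact hg hgC
  have hsurj : ∀ v ∈ codeFinset C',
      ∃ ac, ∃ hac : ac ∈ (Finset.univ : Finset EnlargeAux.GF4) ×ˢ codeFinset C,
        ac.1 • g + ac.2 = v := by
    intro v hv
    obtain ⟨a, c, hc, hv'⟩ := (hmemC' v).1 ((memA' v).1 hv)
    exact ⟨(a, c), Finset.mem_product.2 ⟨Finset.mem_univ a, (memA c).2 hc⟩, hv'⟩
  -- the sum over C' as a double sum
  have hsum : ∑ v ∈ codeFinset C', EnlargeAux.fwt p0 q v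
      = ∑ a : EnlargeAux.GF4, ∑ c ∈ codeFinset C, EnlargeAux.fwt p0 q (a • g + c) := by
    rw [← Finset.sum_product']
    exact (Finset.sum_bij
      (fun (ac : EnlargeAux.GF4 × (Fin N → GaloisField 2 2)) _ => ac.1 • g + ac.2)
      hmaps hinj hsurj (fun ac hac => rfl)).symm
  have hcard4 : Fintype.card EnlargeAux.GF4 = 4 := by
    have h := GaloisField.card 2 2 (by norm_num)
    rw [Nat.card_eq_fintype_card] at h
    rw [h]; norm_num
  have hcard' : ((codeFinset C').card : ℝ) = 4 * ((codeFinset C).card : ℝ) := by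
    have := (Finset.card_bij
      (fun (ac : EnlargeAux.GF4 × (Fin N → GaloisField 2 2)) _ => ac.1 • g + ac.2)
      hmaps hinj hsurj).symm
    rw [this, Finset.card_product, Finset.card_univ, hcard4]
    push_cast; ring
  have hcardApos : 0 < ((codeFinset C).card : ℝ) := by
    have : (0 : Fin N → GaloisField 2 2) ∈ codeFinset C := (memA _).2 C.zero_mem
    exact_mod_cast Finset.card_pos.2 ⟨0, this⟩
  -- fwt nonneg/pos facts
  have hfwt_nonneg : ∀ v : Fin N → GaloisField 2 2, 0 ≤ EnlargeAux.fwt p0 q v := by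
    intro v
    refine Finset.prod_nonneg fun i _ => ?_
    unfold EnlargeAux.phi
    split_ifs <;> linarith
  have hfwt_zero_pos : 0 < EnlargeAux.fwt p0 q (0 : Fin N → GaloisField 2 2) := by
    refine Finset.prod_pos fun i _ => ?_
    simp [EnlargeAux.phi]
    exact hp0pos
  -- main sum inequality
  set T1 := ∑ c ∈ codeFinset C, EnlargeAux.fwt p0 q c with hT1
  have hkey : ∑ v ∈ codeFinset C', EnlargeAux.fwt p0 q v ≤ 4 * T1 := by
    rw [hsum]
    calc ∑ a : EnlargeAux.GF4, ∑ c ∈ codeFinset C, EnlargeAux.fwt p0 q (a • g + c)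
        ≤ ∑ a : EnlargeAux.GF4, T1 :=
          Finset.sum_le_sum fun a _ => EnlargeAux.coset_le p0 q hq hpq C (a • g)
      _ = 4 * T1 := by
          rw [Finset.sum_const, Finset.card_univ, hcard4, nsmul_eq_mul]
          norm_num
  -- rewriting Fw in terms of fwt
  have hFwC : Fw (codeFinset C) p0 = (((codeFinset C).card : ℝ))⁻¹ * T1 := by
    unfold Fw
    rw [hT1]
    congr 1
    exact Finset.sum_congr rfl fun v _ => by rw [EnlargeAux.fwt_eq p0 q v, hqdef]
  have hFwC' : Fw (codeFinset C') p0
      = (((codeFinset C').card : ℝ))⁻¹ * ∑ v ∈ codeFinset C', EnlargeAux.fwt p0 q v := by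
    unfold Fw
    congr 1
    exact Finset.sum_congr rfl fun v _ => by rw [EnlargeAux.fwt_eq p0 q v, hqdef]
  have hT1pos : 0 < T1 := by
    rw [hT1]
    refine Finset.sum_pos' (fun v _ => hfwt_nonneg v) ⟨0, (memA _).2 C.zero_mem, hfwt_zero_pos⟩
  have hmain : Fw (codeFinset C') p0 ≤ Fw (codeFinset C) p0 := by
    rw [hFwC, hFwC', hcard']
    rw [mul_inv]
    calc (4:ℝ)⁻¹ * ((codeFinset C).card : ℝ)⁻¹ * ∑ v ∈ codeFinset C', EnlargeAux.fwt p0 q v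
        ≤ (4:ℝ)⁻¹ * ((codeFinset C).card : ℝ)⁻¹ * (4 * T1) := by
          have h4 : (0:ℝ) ≤ (4:ℝ)⁻¹ * ((codeFinset C).card : ℝ)⁻¹ := by positivity
          exact mul_le_mul_of_nonneg_left hkey h4
      _ = ((codeFinset C).card : ℝ)⁻¹ * T1 := by
          field_simp
  refine ⟨hmain, ?_⟩
  have hposC' : 0 < Fw (codeFinset C') p0 := by
    rw [hFwC', hcard']
    have hsumpos : 0 < ∑ v ∈ codeFinset C', EnlargeAux.fwt p0 q v := by
      refine Finset.sum_pos' (fun v _ => hfwt_nonneg v) ⟨0, (memA' _).2 C'.zero_mem, hfwt_zero_pos⟩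
    positivity
  have h4N : (0:ℝ) < (4:ℝ) ^ N := by positivity
  exact Real.logb_le_logb_of_le (by norm_num) (by positivity)
    (mul_le_mul_of_nonneg_left hmain (le_of_lt h4N))
end
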